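/- Let $\Delta \in (0,1]$ and $\omega$ be the inverse cosine distance map $\omega(w) = \zeta(w^{-2})^{-1/2}$ where $\zeta(z) = z - \Delta\frac{1}{\pi}(\sqrt{1-(1-2z)^2}-(1-2z)\arccos(1-2z))$. Then $\omega'(w) \in [0,1)$ whenever $w \geq (\frac{1-\cos(\min\{\Delta^{-1}\frac{\pi}{2}, \pi\})}{2})^{-1/2}$. -/

import Mathlib

/-!
Put `z = w⁻²` and `θ = arccos (1 - 2z)`, so that `ζ(z) = z - (Δ/π)(sin θ - θ cos θ)` and
`ζ'(z) = 1 - (2Δ/π) θ`. The threshold on `w` says exactly `θ ≤ π/(2Δ)`, whence `0 ≤ ζ'(z)`,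
while `θ > 0` gives `ζ'(z) < 1`. By the chain rule `ω'(w) = ζ'(z) / r^{3/2}` with `r = ζ(z)/z`.
The elementary inequality `3 sin θ ≤ 2θ + θ cos θ` (three integrations of `θ sin θ ≥ 0`) gives
`r ≥ (1 + 2ζ'(z))/3`, and `a < ((1 + 2a)/3)^{3/2}` for `0 ≤ a < 1` closes the argument.
-/

open Real

/-- The squared cosine distance map. -/
noncomputable def zeta (Δ z : ℝ) : ℝ :=
  z - Δ * (1 / π) *
    (Real.sqrt (1 - (1 - 2 * z) ^ 2) - (1 - 2 * z) * Real.arccos (1 - 2 * z))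

/-- The inverse cosine distance map `ω(w) = ζ(w⁻²)^{-1/2}`. -/
noncomputable def omegaMap (Δ w : ℝ) : ℝ := (Real.sqrt (zeta Δ ((w ^ 2)⁻¹)))⁻¹

lemma nonneg_of_hasDerivAt_of_nonneg_on_Ioo {f f' : ℝ → ℝ} {a x : ℝ}
    (hf : ∀ t, HasDerivAt f (f' t) t) (hf0 : f 0 = 0) (hf' : ∀ t ∈ Set.Ioo 0 a, 0 ≤ f' t)
    (hx0 : 0 ≤ x) (hxa : x ≤ a) : 0 ≤ f x := by
  have hmono : MonotoneOn f (Set.Icc 0 a) :=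
    monotoneOn_of_hasDerivWithinAt_nonneg (convex_Icc 0 a)
      (HasDerivAt.continuousOn fun t _ ↦ hf t) (fun t _ ↦ (hf t).hasDerivWithinAt)
      (by simpa using hf')
  simpa [hf0] using hmono ⟨le_rfl, hx0.trans hxa⟩ ⟨hx0, hxa⟩ hx0

lemma mul_cos_le_sin {θ : ℝ} (h0 : 0 ≤ θ) (hπ : θ ≤ π) : θ * cos θ ≤ sin θ := by
  have := nonneg_of_hasDerivAt_of_nonneg_on_Ioo (f := fun t ↦ sin t - t * cos t)
    (f' := fun t ↦ t * sin t)
    (fun t ↦ ((hasDerivAt_sin t).sub ((hasDerivAt_id' t).mul (hasDerivAt_cos t))).congr_deriv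
      (by ring))
    (by simp) (fun t ht ↦ mul_nonneg ht.1.le (sin_nonneg_of_nonneg_of_le_pi ht.1.le ht.2.le))
    h0 hπ
  linarith

lemma two_mul_cos_add_mul_sin_le_two {θ : ℝ} (h0 : 0 ≤ θ) (hπ : θ ≤ π) :
    2 * cos θ + θ * sin θ ≤ 2 := by
  have := nonneg_of_hasDerivAt_of_nonneg_on_Ioo (f := fun t ↦ 2 - 2 * cos t - t * sin t)
    (f' := fun t ↦ sin t - t * cos t)
    (fun t ↦ ((((hasDerivAt_cos t).const_mul 2).const_sub 2).sub
      ((hasDerivAt_id' t).mul (hasDerivAt_sin t))).congr_deriv (by ring))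
    (by simp) (fun t ht ↦ sub_nonneg.2 (mul_cos_le_sin ht.1.le ht.2.le)) h0 hπ
  linarith

lemma three_mul_sin_le {θ : ℝ} (h0 : 0 ≤ θ) : 3 * sin θ ≤ 2 * θ + θ * cos θ := by
  rcases le_or_gt θ π with hπ | hπ
  · have := nonneg_of_hasDerivAt_of_nonneg_on_Ioo (f := fun t ↦ 2 * t + t * cos t - 3 * sin t)
      (f' := fun t ↦ 2 - 2 * cos t - t * sin t)
      (fun t ↦ ((((hasDerivAt_id' t).const_mul 2).add ((hasDerivAt_id' t).mul
          (hasDerivAt_cos t))).sub ((hasDerivAt_sin t).const_mul 3)).congr_deriv (by ring))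
      (by simp) (fun t ht ↦ by linarith [two_mul_cos_add_mul_sin_le_two ht.1.le ht.2.le]) h0 hπ
    linarith
  · nlinarith [sin_le_one θ, neg_one_le_cos θ, pi_gt_three]

lemma hasDerivAt_sqrt_one_sub_sq_sub_mul_arccos {u : ℝ} (h1 : -1 < u) (h2 : u < 1) :
    HasDerivAt (fun u ↦ √(1 - u ^ 2) - u * arccos u) (-arccos u) u := by
  have hpos : 0 < 1 - u ^ 2 := by nlinarith
  refine (((hasDerivAt_pow 2 u).const_sub 1).sqrt hpos.ne' |>.sub
    ((hasDerivAt_id' u).mul (hasDerivAt_arccos h1.ne' h2.ne))).congr_deriv ?_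
  field_simp
  ring

noncomputable def zetaDeriv (Δ z : ℝ) : ℝ := 1 - Δ * (2 / π) * arccos (1 - 2 * z)

lemma hasDerivAt_zeta (Δ : ℝ) {z : ℝ} (h0 : 0 < z) (h1 : z < 1) :
    HasDerivAt (zeta Δ) (zetaDeriv Δ z) z := by
  have hinner := ((hasDerivAt_id' z).const_mul 2).const_sub 1
  have houter := hasDerivAt_sqrt_one_sub_sq_sub_mul_arccos
    (u := 1 - 2 * z) (by linarith) (by linarith)
  refine ((hasDerivAt_id' z).sub ((houter.comp z hinner).const_mul (Δ * (1 / π)))).congr_deriv ?_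
  rw [zetaDeriv]
  ring

lemma le_zeta {Δ z : ℝ} (hΔ : 0 ≤ Δ) (h0 : 0 ≤ z) (h1 : z ≤ 1) :
    z * (1 + 2 * zetaDeriv Δ z) / 3 ≤ zeta Δ z := by
  set θ := arccos (1 - 2 * z)
  have hcos : cos θ = 1 - 2 * z := cos_arccos (by linarith) (by linarith)
  have hsin : sin θ = √(1 - (1 - 2 * z) ^ 2) := sin_arccos _
  have hgap : 0 ≤ Δ / π * (2 * θ + θ * cos θ - 3 * sin θ) :=
    mul_nonneg (by positivity) (sub_nonneg.2 (three_mul_sin_le (arccos_nonneg _)))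
  -- `ζ(z) - z (1 + 2ζ'(z)) / 3` is exactly `hgap / 3`, using `2z = 1 - cos θ`
  rw [zeta, zetaDeriv, ← hsin]
  rw [hcos] at hgap
  field_simp at hgap ⊢
  linarith

lemma zetaDeriv_lt_one {Δ z : ℝ} (hΔ : 0 < Δ) (hz : 0 < z) : zetaDeriv Δ z < 1 := by
  have hθ : 0 < arccos (1 - 2 * z) := arccos_pos.2 (by linarith)
  have : 0 < Δ * (2 / π) * arccos (1 - 2 * z) := by positivity
  rw [zetaDeriv]
  linarith

lemma zetaDeriv_nonneg {Δ z : ℝ} (hΔ : 0 < Δ) (hz : cos (min (Δ⁻¹ * (π / 2)) π) ≤ 1 - 2 * z) :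
    0 ≤ zetaDeriv Δ z := by
  have hθ : arccos (1 - 2 * z) ≤ Δ⁻¹ * (π / 2) :=
    calc arccos (1 - 2 * z) ≤ arccos (cos (min (Δ⁻¹ * (π / 2)) π)) := arccos_le_arccos hz
      _ = min (Δ⁻¹ * (π / 2)) π := arccos_cos (by positivity) (min_le_right _ _)
      _ ≤ Δ⁻¹ * (π / 2) := min_le_left _ _
  have : Δ * (2 / π) * arccos (1 - 2 * z) ≤ 1 :=
    calc Δ * (2 / π) * arccos (1 - 2 * z) ≤ Δ * (2 / π) * (Δ⁻¹ * (π / 2)) := by gcongr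
      _ = 1 := by field_simp
  rw [zetaDeriv]
  linarith

lemma hasDerivAt_inv_sqrt_comp_inv_sq {f : ℝ → ℝ} {a w : ℝ} (hw : 0 < w)
    (hf : HasDerivAt f a (w ^ 2)⁻¹) (hpos : 0 < f (w ^ 2)⁻¹) :
    HasDerivAt (fun w ↦ (√(f (w ^ 2)⁻¹))⁻¹)
      (a / (w ^ 2 * f (w ^ 2)⁻¹ * √(w ^ 2 * f (w ^ 2)⁻¹))) w := by
  have hinner := (hasDerivAt_pow 2 w).inv (by positivity)
  refine ((hf.comp w hinner).sqrt hpos.ne' |>.inv (by positivity)).congr_deriv ?_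
  simp only [Function.comp_apply, Pi.inv_apply, sq_sqrt hpos.le, sqrt_mul (sq_nonneg w),
    sqrt_sq hw.le]
  field_simp
  ring

lemma lt_mul_sqrt_one_add_two_mul_div_three {a : ℝ} (ha0 : 0 ≤ a) (ha1 : a < 1) :
    a < (1 + 2 * a) / 3 * √((1 + 2 * a) / 3) := by
  refine lt_of_pow_lt_pow_left₀ 2 (by positivity) ?_
  rw [mul_pow, sq_sqrt (by positivity)]
  -- `((1 + 2a) / 3) ^ 3 - a ^ 2 = (1 - a) ^ 2 (1 + 8a) / 27`
  nlinarith [mul_pos (pow_pos (sub_pos.2 ha1) 2) (by linarith : 0 < 1 + 8 * a)]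

lemma div_mul_sqrt_mem_Ico {a r : ℝ} (ha0 : 0 ≤ a) (ha1 : a < 1) (hr : (1 + 2 * a) / 3 ≤ r) :
    a / (r * √r) ∈ Set.Ico 0 1 := by
  have hc : 0 < (1 + 2 * a) / 3 := by linarith
  have hr0 : 0 < r := hc.trans_le hr
  refine ⟨by positivity, (div_lt_one (by positivity)).2 ?_⟩
  calc a < (1 + 2 * a) / 3 * √((1 + 2 * a) / 3) := lt_mul_sqrt_one_add_two_mul_div_three ha0 ha1
    _ ≤ r * √r := by gcongr

lemma inv_sq_le_of_inv_sqrt_le {s w : ℝ} (hs : 0 < s) (hw : (√s)⁻¹ ≤ w) : (w ^ 2)⁻¹ ≤ s := by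
  have hw0 : 0 < w := lt_of_lt_of_le (by positivity) hw
  have : w⁻¹ ≤ √s := by simpa using inv_anti₀ (by positivity) hw
  calc (w ^ 2)⁻¹ = w⁻¹ ^ 2 := (inv_pow w 2).symm
    _ ≤ √s ^ 2 := by gcongr
    _ = s := sq_sqrt hs.le

/-- `ω'(w) ∈ [0,1)` whenever `w ≥ ((1 - cos(min(Δ⁻¹ π/2, π)))/2)^{-1/2}`
(on the domain `(1,∞)` of `ω`). -/
theorem omega_deriv_mem_Ico (Δ : ℝ) (hΔ : Δ ∈ Set.Ioc (0 : ℝ) 1) (w : ℝ) (hw1 : 1 < w)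
    (hw : (Real.sqrt ((1 - Real.cos (min (Δ⁻¹ * (π / 2)) π)) / 2))⁻¹ ≤ w) :
    deriv (omegaMap Δ) w ∈ Set.Ico (0 : ℝ) 1 := by
  obtain ⟨hΔ0, -⟩ := hΔ
  have hw0 : 0 < w := by linarith
  have hz0 : 0 < (w ^ 2)⁻¹ := by positivity
  have hz1 : (w ^ 2)⁻¹ < 1 := inv_lt_one_of_one_lt₀ (by nlinarith)
  set m := min (Δ⁻¹ * (π / 2)) π
  have hm : cos m < 1 := by
    simpa using cos_lt_cos_of_nonneg_of_le_pi le_rfl (min_le_right _ _)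
      (lt_min (by positivity) pi_pos)
  have hz := inv_sq_le_of_inv_sqrt_le (by linarith) hw
  have ha0 := zetaDeriv_nonneg hΔ0 (by linarith : cos m ≤ 1 - 2 * (w ^ 2)⁻¹)
  have hζ := le_zeta hΔ0.le hz0.le hz1.le
  have hζ0 : 0 < zeta Δ (w ^ 2)⁻¹ := lt_of_lt_of_le (by positivity) hζ
  have hD : HasDerivAt (omegaMap Δ) _ w :=
    hasDerivAt_inv_sqrt_comp_inv_sq hw0 (hasDerivAt_zeta Δ hz0 hz1) hζ0
  rw [hD.deriv]
  refine div_mul_sqrt_mem_Ico ha0 (zetaDeriv_lt_one hΔ0 hz0) ?_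
  calc (1 + 2 * zetaDeriv Δ (w ^ 2)⁻¹) / 3
      = w ^ 2 * ((w ^ 2)⁻¹ * (1 + 2 * zetaDeriv Δ (w ^ 2)⁻¹) / 3) := by field_simp
    _ ≤ w ^ 2 * zeta Δ (w ^ 2)⁻¹ := by gcongr
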